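/- arXiv:1903.03274 — 6 statements merged into one kernel-verified Lean document; each statement's English description precedes it below -/
import Mathlib

section
/- The series ∑_{m=1}^∞ (2m-2)!/(m!·(m-1)!) · 2/4^m converges to 1. -/
/-!
Let `u n = C(2n, n) / 4ⁿ` (`returnProb n`) be the probability that a fair ±1 walk is back at `0`
after `2n` steps. The ratio `u (n + 1) / u n = (2n + 1) / (2n + 2)` makes the summand, the
probability `Cₘ / 2^(2m+1)` of a first passage to `1` at step `2m + 1`, equal to
`u m - u (m + 1)`. The series telescopes to `u 0 - lim u = 1`, and `u n → 0` because the same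
ratio gives `(n + 1) u n² ≤ 1`.
-/

open Filter Topology

theorem hasSum_sub_succ_of_antitone {f : ℕ → ℝ} {l : ℝ} (hf : Antitone f)
    (hl : Tendsto f atTop (𝓝 l)) : HasSum (fun n => f n - f (n + 1)) (f 0 - l) := by
  rw [hasSum_iff_tendsto_nat_of_nonneg fun n => sub_nonneg.2 (hf n.le_succ)]
  simp only [Finset.sum_range_sub']
  exact tendsto_const_nhds.sub hl

noncomputable def returnProb (n : ℕ) : ℝ := n.centralBinom / 4 ^ n

theorem returnProb_zero : returnProb 0 = 1 := by
  simp [returnProb]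

theorem returnProb_nonneg (n : ℕ) : 0 ≤ returnProb n := by
  unfold returnProb
  positivity

theorem returnProb_succ (n : ℕ) :
    returnProb (n + 1) = (2 * n + 1) / (2 * n + 2) * returnProb n := by
  have hrec : ((n : ℝ) + 1) * (n + 1).centralBinom = 2 * (2 * n + 1) * n.centralBinom := by
    exact_mod_cast Nat.succ_mul_centralBinom_succ n
  unfold returnProb
  field_simp
  rw [pow_succ]
  linear_combination 2 * 4 ^ n * hrec

theorem succ_mul_returnProb_sq_le_one (n : ℕ) : (n + 1) * returnProb n ^ 2 ≤ 1 := by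
  induction n with
  | zero => simp [returnProb_zero]
  | succ n ih =>
    have hratio : ((n : ℝ) + 2) * (2 * n + 1) ^ 2 ≤ 4 * (n + 1) ^ 3 := by nlinarith
    rw [returnProb_succ, mul_pow, div_pow, ← mul_assoc, mul_div_assoc', div_mul_eq_mul_div,
      div_le_one (by positivity)]
    push_cast
    nlinarith

theorem tendsto_returnProb_atTop : Tendsto returnProb atTop (𝓝 0) := by
  have hbound (n : ℕ) : returnProb n ≤ √(1 / (n + 1)) := by
    rw [Real.le_sqrt (returnProb_nonneg n) (by positivity), le_div_iff₀ (by positivity)]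
    linarith [succ_mul_returnProb_sq_le_one n]
  have hsqrt : Tendsto (fun n : ℕ => √(1 / ((n : ℝ) + 1))) atTop (𝓝 0) := by
    simpa using tendsto_one_div_add_atTop_nhds_zero_nat.sqrt
  exact squeeze_zero returnProb_nonneg hbound hsqrt

theorem returnProb_sub_returnProb_succ (n : ℕ) :
    returnProb n - returnProb (n + 1) = returnProb n / (2 * (n + 1)) := by
  rw [returnProb_succ]
  field_simp
  ring

theorem cast_catalan_eq_factorial (m : ℕ) :
    (catalan m : ℝ) = (2 * m).factorial / ((m + 1).factorial * m.factorial) := by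
  have hcentral : (m.centralBinom : ℝ) = (2 * m).factorial / (m.factorial * m.factorial) := by
    rw [Nat.centralBinom_eq_two_mul_choose, Nat.cast_choose ℝ (by omega),
      show 2 * m - m = m by omega]
  have hcatalan : ((m : ℝ) + 1) * catalan m = m.centralBinom := by
    exact_mod_cast succ_mul_catalan_eq_centralBinom m
  rw [Nat.factorial_succ, Nat.cast_mul, mul_assoc, ← div_div, div_right_comm, ← hcentral,
    ← hcatalan]
  push_cast
  field_simp

theorem catalan_mul_two_div_four_pow_succ (m : ℕ) :
    (catalan m : ℝ) * 2 / 4 ^ (m + 1) = returnProb m - returnProb (m + 1) := by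
  have hcatalan : ((m : ℝ) + 1) * catalan m = m.centralBinom := by
    exact_mod_cast succ_mul_catalan_eq_centralBinom m
  rw [returnProb_sub_returnProb_succ, returnProb, ← hcatalan]
  field_simp
  ring

/-- `∑_{m=1}^∞ (2m-2)!/(m!·(m-1)!) · 2/4^m = 1`. -/
theorem stmt_3 :
    HasSum (fun m : ℕ =>
      ((2 * m).factorial : ℝ) / ((m + 1).factorial * m.factorial) * 2 / 4 ^ (m + 1)) 1 := by
  have hterm (m : ℕ) : ((2 * m).factorial : ℝ) / ((m + 1).factorial * m.factorial) * 2 /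
      4 ^ (m + 1) = returnProb m - returnProb (m + 1) := by
    rw [← cast_catalan_eq_factorial, catalan_mul_two_div_four_pow_succ]
  have hanti : Antitone returnProb := antitone_nat_of_succ_le fun n => by
    rw [← sub_nonneg, returnProb_sub_returnProb_succ]
    have := returnProb_nonneg n
    positivity
  simpa [hterm, returnProb_zero] using hasSum_sub_succ_of_antitone hanti tendsto_returnProb_atTop
end

section
/- Define C(n,k) for integers n ≥ 0, k ≥ 0 as the number of walks of length k with steps ±1 starting at 0 that end at n-1 and never reach n. Then C(n,k) = 0 when n ≡ k (mod 2); C(2s+1, 2m) = (2s+1)/(m+s+1) · binomial(2m, m-s) for s ≥ 0, m ≥ 0; and C(2s, 2m-1) = (s/m) · binomial(2m, m-s) for s ≥ 1, m ≥ 1. -/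
/-- `walkCount n k` is the number of walks of length `k` with steps `±1`, starting at `0`,
that end at `n - 1` and never reach `n` (all partial sums stay below `n`). -/
noncomputable def walkCount (n : ℤ) (k : ℕ) : ℕ :=
  Nat.card {ε : Fin k → Bool //
    (∑ i, (if ε i then (1 : ℤ) else -1)) = n - 1 ∧
    ∀ j, j ≤ k →
      (∑ i ∈ Finset.univ.filter (fun i : Fin k => (i : ℕ) < j),
        (if ε i then (1 : ℤ) else -1)) < n}

def WPred (n : ℤ) (k : ℕ) (ε : Fin k → Bool) : Prop :=
  (∑ i, (if ε i then (1 : ℤ) else -1)) = n - 1 ∧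
    ∀ j, j ≤ k →
      (∑ i ∈ Finset.univ.filter (fun i : Fin k => (i : ℕ) < j),
        (if ε i then (1 : ℤ) else -1)) < n

lemma walkCount_def (n : ℤ) (k : ℕ) :
    walkCount n k = Nat.card {ε : Fin k → Bool // WPred n k ε} := rfl

lemma prefix_zero (k : ℕ) (f : Fin k → ℤ) :
    (∑ i ∈ Finset.univ.filter (fun i : Fin k => (i : ℕ) < 0), f i) = 0 := by
  simp

lemma prefix_succ (k j : ℕ) (f : Fin (k+1) → ℤ) :
    (∑ i ∈ Finset.univ.filter (fun i : Fin (k+1) => (i : ℕ) < j + 1), f i)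
      = f 0 + ∑ i ∈ Finset.univ.filter (fun i : Fin k => (i : ℕ) < j), f i.succ := by
  rw [Finset.sum_filter, Finset.sum_filter, Fin.sum_univ_succ]
  simp [Nat.succ_lt_succ_iff]

lemma wpred_succ_iff (n : ℤ) (hn : 1 ≤ n) (k : ℕ) (ε : Fin (k+1) → Bool) :
    WPred n (k+1) ε ↔
      ((ε 0 = true ∧ WPred (n-1) k (Fin.tail ε)) ∨
       (ε 0 = false ∧ WPred (n+1) k (Fin.tail ε))) := by
  have htail : ∀ i : Fin k, Fin.tail ε i = ε i.succ := fun i => rfl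
  constructor
  · rintro ⟨hsum, hpre⟩
    rw [Fin.sum_univ_succ] at hsum
    cases hb : ε 0 with
    | true =>
      left
      refine ⟨rfl, ?_, ?_⟩
      · rw [hb] at hsum; norm_num at hsum
        simp only [htail]; linarith
      · intro j hj
        have h := hpre (j+1) (by omega)
        rw [prefix_succ, hb] at h
        norm_num at h
        simp only [htail]; linarith
    | false =>
      right
      refine ⟨rfl, ?_, ?_⟩
      · rw [hb] at hsum; norm_num at hsum
        simp only [htail]; linarith
      · intro j hj
        have h := hpre (j+1) (by omega)
        rw [prefix_succ, hb] at h
        norm_num at h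
        simp only [htail]; linarith
  · rintro (⟨hb, hsum, hpre⟩ | ⟨hb, hsum, hpre⟩) <;>
      simp only [htail] at hsum hpre <;>
      refine ⟨by rw [Fin.sum_univ_succ, hb]; simp; linarith, ?_⟩ <;>
      · intro j hj
        match j with
        | 0 => rw [prefix_zero]; linarith
        | (j+1) =>
          rw [prefix_succ, hb]
          have h := hpre j (by omega)
          norm_num
          linarith

def splitEquiv (k : ℕ) (b : Bool) (Q : (Fin k → Bool) → Prop) :
    {ε : Fin (k+1) → Bool // ε 0 = b ∧ Q (Fin.tail ε)} ≃ {δ : Fin k → Bool // Q δ} where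
  toFun ε := ⟨Fin.tail ε.1, ε.2.2⟩
  invFun δ := ⟨Fin.cons b δ.1, by simp [Fin.tail_cons, δ.2]⟩
  left_inv := fun ⟨ε, h⟩ => by
    apply Subtype.ext
    show Fin.cons b (Fin.tail ε) = ε
    rw [← h.1, Fin.cons_self_tail]
  right_inv := fun δ => by
    apply Subtype.ext
    simp [Fin.tail_cons]

lemma walkCount_rec (n : ℤ) (hn : 1 ≤ n) (k : ℕ) :
    walkCount n (k+1) = walkCount (n-1) k + walkCount (n+1) k := by
  classical
  rw [walkCount_def, walkCount_def, walkCount_def, ← Nat.card_sum]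
  apply Nat.card_congr
  calc {ε : Fin (k+1) → Bool // WPred n (k+1) ε}
      ≃ {ε : Fin (k+1) → Bool //
          (ε 0 = true ∧ WPred (n-1) k (Fin.tail ε)) ∨
          (ε 0 = false ∧ WPred (n+1) k (Fin.tail ε))} :=
        Equiv.subtypeEquivRight (fun ε => wpred_succ_iff n hn k ε)
    _ ≃ {ε : Fin (k+1) → Bool // ε 0 = true ∧ WPred (n-1) k (Fin.tail ε)} ⊕
        {ε : Fin (k+1) → Bool // ε 0 = false ∧ WPred (n+1) k (Fin.tail ε)} :=
        subtypeOrEquiv _ _ (by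
          rw [Pi.disjoint_iff]
          intro ε
          simp only [Prop.disjoint_iff]
          rintro ⟨⟨h1, -⟩, ⟨h2, -⟩⟩
          rw [h1] at h2; exact Bool.noConfusion h2)
    _ ≃ {δ : Fin k → Bool // WPred (n-1) k δ} ⊕ {δ : Fin k → Bool // WPred (n+1) k δ} :=
        Equiv.sumCongr (splitEquiv k true _) (splitEquiv k false _)

lemma walkCount_nonpos (n : ℤ) (hn : n ≤ 0) (k : ℕ) : walkCount n k = 0 := by
  rw [walkCount_def]
  have : IsEmpty {ε : Fin k → Bool // WPred n k ε} := by
    constructor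
    rintro ⟨ε, -, hpre⟩
    have := hpre 0 (by omega)
    rw [prefix_zero] at this
    omega
  exact Nat.card_of_isEmpty

lemma walkCount_k_zero (n : ℤ) : walkCount n 0 = if n = 1 then 1 else 0 := by
  rw [walkCount_def]
  split
  · next h =>
    subst h
    have hne : Nonempty {ε : Fin 0 → Bool // WPred 1 0 ε} :=
      ⟨⟨default, by constructor <;> simp [WPred]⟩⟩
    have hsub : Subsingleton {ε : Fin 0 → Bool // WPred 1 0 ε} := by
      constructor; intro a b; apply Subtype.ext; funext i; exact i.elim0
    exact Nat.card_unique
  · next h =>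
    have : IsEmpty {ε : Fin 0 → Bool // WPred n 0 ε} := by
      constructor
      rintro ⟨ε, hsum, -⟩
      simp only [Finset.univ_eq_empty, Finset.sum_empty] at hsum
      exact h (by linarith)
    exact Nat.card_of_isEmpty

lemma key (k : ℕ) : ∀ N : ℕ, (k + N) % 2 = 1 →
    (walkCount N k : ℤ) = (k.choose ((k + N - 1)/2) : ℤ) - (k.choose ((k + N + 1)/2) : ℤ) := by
  induction k with
  | zero =>
    intro N hN
    rw [walkCount_k_zero]
    rcases eq_or_ne N 1 with h | h
    · subst h; norm_num
    · have hN3 : 3 ≤ N := by omega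
      rw [if_neg (by exact_mod_cast fun h' => h (by exact_mod_cast h'))]
      have e1 : (0 + N - 1)/2 ≠ 0 := by omega
      have e2 : (0 + N + 1)/2 ≠ 0 := by omega
      rw [Nat.choose_eq_zero_iff.mpr (by omega), Nat.choose_eq_zero_iff.mpr (by omega)]
      simp
  | succ k ih =>
    intro N hN
    rcases Nat.eq_zero_or_pos N with h0 | hpos
    · subst h0
      rw [Nat.cast_zero, walkCount_nonpos 0 le_rfl]
      have hk : k % 2 = 0 := by omega
      have e1 : (k + 1 + 0 - 1)/2 = k/2 := by omega
      have e2 : (k + 1 + 0 + 1)/2 = k/2 + 1 := by omega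
      rw [e1, e2]
      have : (k+1).choose (k/2) = (k+1).choose (k/2+1) := by
        have h' : k/2 + 1 ≤ k + 1 := by omega
        rw [← Nat.choose_symm h']
        congr 1
        omega
      rw [this]; ring
    · have hrec := walkCount_rec (N : ℤ) (by exact_mod_cast hpos) k
      have c1 : ((N : ℤ) - 1) = ((N - 1 : ℕ) : ℤ) := by
        push_cast [Nat.cast_sub hpos]; ring
      have c2 : ((N : ℤ) + 1) = ((N + 1 : ℕ) : ℤ) := by push_cast; ring
      rw [c1, c2] at hrec
      have ih1 := ih (N-1) (by omega)
      have ih2 := ih (N+1) (by omega)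
      obtain ⟨t, ht⟩ : ∃ t, k + N = 2*t + 2 := ⟨(k+N)/2 - 1, by omega⟩
      have e1 : (k + (N-1) - 1)/2 = t := by omega
      have e2 : (k + (N-1) + 1)/2 = t + 1 := by omega
      have e3 : (k + (N+1) - 1)/2 = t + 1 := by omega
      have e4 : (k + (N+1) + 1)/2 = t + 2 := by omega
      have e5 : (k + 1 + N - 1)/2 = t + 1 := by omega
      have e6 : (k + 1 + N + 1)/2 = t + 2 := by omega
      rw [e1, e2] at ih1
      rw [e3, e4] at ih2
      have hrecZ : (walkCount (↑N) (k+1) : ℤ)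
          = (walkCount (↑(N-1) : ℤ) k : ℤ) + (walkCount (↑(N+1) : ℤ) k : ℤ) := by
        exact_mod_cast hrec
      rw [e5, e6, hrecZ, ih1, ih2]
      have p1 : (k+1).choose (t+1) = k.choose t + k.choose (t+1) := Nat.choose_succ_succ k t
      have p2 : (k+1).choose (t+2) = k.choose (t+1) + k.choose (t+2) := Nat.choose_succ_succ k (t+1)
      push_cast [p1, p2]
      ring


lemma walkCount_parity (n k : ℕ) (h : n % 2 = k % 2) : walkCount n k = 0 := by
  rw [walkCount_def]
  have : IsEmpty {ε : Fin k → Bool // WPred (n : ℤ) k ε} := by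
    constructor
    rintro ⟨ε, hsum, -⟩
    have hZ := congrArg (Int.cast : ℤ → ZMod 2) hsum
    push_cast at hZ
    have hL : (∑ i : Fin k, (if ε i = true then (1 : ZMod 2) else -1)) = (k : ZMod 2) := by
      rw [Finset.sum_congr rfl (fun i _ => show (if ε i = true then (1 : ZMod 2) else -1) = 1 by
        split <;> decide)]
      simp
    rw [hL] at hZ
    have hnk : (n : ZMod 2) = (k : ZMod 2) := by
      rw [ZMod.natCast_eq_natCast_iff']
      simpa using h
    rw [hnk] at hZ
    have : (1 : ZMod 2) = 0 := by
      have := sub_eq_self.mp hZ.symm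
      exact this
    exact one_ne_zero this
  exact Nat.card_of_isEmpty


lemma part2 (s m : ℕ) : (walkCount (2 * s + 1) (2 * m) : ℝ)
    = (2 * s + 1) / (m + s + 1) *
      (if s ≤ m then ((2 * m).choose (m - s) : ℝ) else 0) := by
  have hkey := key (2*m) (2*s+1) (by omega)
  have e1 : (2*m + (2*s+1) - 1)/2 = m + s := by omega
  have e2 : (2*m + (2*s+1) + 1)/2 = m + s + 1 := by omega
  rw [e1, e2] at hkey
  have hcast : (walkCount (2 * (s:ℤ) + 1) (2 * m) : ℤ)
      = (walkCount ((2*s+1 : ℕ) : ℤ) (2*m) : ℤ) := by push_cast; ring_nf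
  by_cases hs : s ≤ m
  · rw [if_pos hs]
    have hsymm : (2*m).choose (m+s) = (2*m).choose (m-s) := by
      rw [show m - s = 2*m - (m+s) from by omega, Nat.choose_symm (by omega)]
    have hrel : (2*m).choose (m+s+1) * (m+s+1) = (2*m).choose (m+s) * (m - s) := by
      have h := Nat.choose_succ_right_eq (2*m) (m+s)
      rwa [show 2*m - (m+s) = m - s from by omega] at h
    have hW : (walkCount (2 * (s:ℤ) + 1) (2 * m) : ℝ)
        = ((2*m).choose (m+s) : ℝ) - ((2*m).choose (m+s+1) : ℝ) := by
      have : (walkCount (2 * (s:ℤ) + 1) (2 * m) : ℤ)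
          = ((2*m).choose (m+s) : ℤ) - ((2*m).choose (m+s+1) : ℤ) := by
        rw [hcast, hkey]
      exact_mod_cast congrArg (Int.cast : ℤ → ℝ) this
    rw [hW, ← hsymm]
    have hne : ((m : ℝ) + s + 1) ≠ 0 := by positivity
    have hrelR : ((2*m).choose (m+s+1) : ℝ) * ((m:ℝ)+s+1)
        = ((2*m).choose (m+s) : ℝ) * ((m:ℝ) - s) := by
      have := congrArg (Nat.cast : ℕ → ℝ) hrel
      push_cast [hs] at this
      linarith
    field_simp
    ring_nf
    ring_nf at hrelR
    nlinarith [hrelR]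
  · rw [if_neg hs]
    have z1 : (2*m).choose (m+s) = 0 := Nat.choose_eq_zero_of_lt (by omega)
    have z2 : (2*m).choose (m+s+1) = 0 := Nat.choose_eq_zero_of_lt (by omega)
    have : (walkCount (2 * (s:ℤ) + 1) (2 * m) : ℤ) = 0 := by
      rw [hcast, hkey, z1, z2]; simp
    have : walkCount (2 * (s:ℤ) + 1) (2 * m) = 0 := by exact_mod_cast this
    rw [this]
    simp


lemma part3 (s m : ℕ) (hs1 : 1 ≤ s) (hm : 1 ≤ m) : (walkCount (2 * s) (2 * m - 1) : ℝ)
    = s / m * (if s ≤ m then ((2 * m).choose (m - s) : ℝ) else 0) := by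
  have hkey := key (2*m-1) (2*s) (by omega)
  have e1 : (2*m-1 + 2*s - 1)/2 = m + s - 1 := by omega
  have e2 : (2*m-1 + 2*s + 1)/2 = m + s := by omega
  rw [e1, e2] at hkey
  have hcast : (walkCount (2 * (s:ℤ)) (2*m-1) : ℤ)
      = (walkCount ((2*s : ℕ) : ℤ) (2*m-1) : ℤ) := by push_cast; ring_nf
  by_cases hsm : s ≤ m
  · rw [if_pos hsm]
    set A := (2*m-1).choose (m+s-1) with hA
    set B := (2*m-1).choose (m+s) with hB
    set C := (2*m).choose (m+s) with hC
    have hPascal : A + B = C := by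
      rw [hA, hB, hC]
      have := Nat.choose_succ_succ (2*m-1) (m+s-1)
      simp only [Nat.succ_eq_add_one] at this
      rw [show 2*m-1+1 = 2*m from by omega, show m+s-1+1 = m+s from by omega] at this
      omega
    have hRatio : 2*m * A = C * (m+s) := by
      have := Nat.add_one_mul_choose_eq (2*m-1) (m+s-1)
      rw [show 2*m-1+1 = 2*m from by omega, show m+s-1+1 = m+s from by omega] at this
      rw [hA, hC]; omega
    have hsymm : (2*m).choose (m-s) = C := by
      rw [hC, show m - s = 2*m - (m+s) from by omega, Nat.choose_symm (by omega)]
    have hW : (walkCount (2 * (s:ℤ)) (2*m-1) : ℝ) = (A : ℝ) - (B : ℝ) := by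
      have : (walkCount (2 * (s:ℤ)) (2*m-1) : ℤ) = (A : ℤ) - (B : ℤ) := by
        rw [hcast, hkey]
      exact_mod_cast congrArg (Int.cast : ℤ → ℝ) this
    rw [hW, hsymm]
    have hne : (m : ℝ) ≠ 0 := by positivity
    field_simp
    have h1 : (A : ℝ) + B = C := by exact_mod_cast congrArg (Nat.cast : ℕ → ℝ) hPascal
    have h2 : 2*(m:ℝ) * A = (C:ℝ) * ((m:ℝ)+s) := by exact_mod_cast congrArg (Nat.cast : ℕ → ℝ) hRatio
    nlinarith [h1, h2]
  · rw [if_neg hsm]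
    have z1 : (2*m-1).choose (m+s-1) = 0 := Nat.choose_eq_zero_of_lt (by omega)
    have z2 : (2*m-1).choose (m+s) = 0 := Nat.choose_eq_zero_of_lt (by omega)
    have h0 : (walkCount (2 * (s:ℤ)) (2*m-1) : ℤ) = 0 := by
      rw [hcast, hkey, z1, z2]; simp
    have : walkCount (2 * (s:ℤ)) (2*m-1) = 0 := by exact_mod_cast h0
    rw [this]
    simp

/-- `C(n,k) = 0` when `n ≡ k (mod 2)`; `C(2s+1, 2m) = (2s+1)/(m+s+1)·binom(2m, m-s)`;
`C(2s, 2m-1) = (s/m)·binom(2m, m-s)` (binomials with negative lower index are `0`). -/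
theorem stmt_7 :
    (∀ n k : ℕ, n % 2 = k % 2 → walkCount n k = 0) ∧
    (∀ s m : ℕ, (walkCount (2 * s + 1) (2 * m) : ℝ)
      = (2 * s + 1) / (m + s + 1) *
        (if s ≤ m then ((2 * m).choose (m - s) : ℝ) else 0)) ∧
    (∀ s m : ℕ, 1 ≤ s → 1 ≤ m → (walkCount (2 * s) (2 * m - 1) : ℝ)
      = s / m * (if s ≤ m then ((2 * m).choose (m - s) : ℝ) else 0)) :=
  ⟨walkCount_parity, part2, part3⟩
end

section
/- Define r(n,k) = C(n,k-1)/2^k where C(n,k) counts ±1 walks of length k from 0 ending at n-1 that never reach n. Then for every n ≥ 1, ∑_{k=1}^∞ r(n,k) = 1. -/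
def SRWstep (b : Bool) : ℤ := if b then 1 else -1

def psum {m : ℕ} (ε : Fin m → Bool) (j : ℕ) : ℤ :=
  ∑ i ∈ Finset.univ.filter (fun i : Fin m => (i : ℕ) < j), (if ε i then (1:ℤ) else -1)

lemma psum_zero {m : ℕ} (ε : Fin m → Bool) : psum ε 0 = 0 := by
  simp [psum]

lemma psum_eq_sum_ite {m : ℕ} (ε : Fin m → Bool) (j : ℕ) :
    psum ε j = ∑ i : Fin m, if (i : ℕ) < j then (if ε i then (1:ℤ) else -1) else 0 := by
  rw [psum, Finset.sum_filter]

lemma psum_top {m : ℕ} (ε : Fin m → Bool) {j : ℕ} (h : m ≤ j) :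
    psum ε j = ∑ i, (if ε i then (1:ℤ) else -1) := by
  rw [psum_eq_sum_ite]
  apply Finset.sum_congr rfl
  intro i _
  rw [if_pos (lt_of_lt_of_le i.isLt h)]

lemma psum_succ {m : ℕ} (ε : Fin m → Bool) {j : ℕ} (h : j < m) :
    psum ε (j + 1) = psum ε j + (if ε ⟨j, h⟩ then (1:ℤ) else -1) := by
  rw [psum, psum]
  have : Finset.univ.filter (fun i : Fin m => (i : ℕ) < j + 1)
      = insert ⟨j, h⟩ (Finset.univ.filter (fun i : Fin m => (i : ℕ) < j)) := by
    ext i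
    simp only [Finset.mem_insert, Finset.mem_filter, Finset.mem_univ, true_and,
      Fin.ext_iff]
    omega
  rw [this, Finset.sum_insert (by simp), add_comm]

lemma psum_cons {m : ℕ} (b : Bool) (δ : Fin m → Bool) (j : ℕ) :
    psum (Fin.cons b δ) (j + 1) = (if b then (1:ℤ) else -1) + psum δ j := by
  rw [psum_eq_sum_ite, psum_eq_sum_ite, Fin.sum_univ_succ]
  simp only [Fin.cons_zero, Fin.cons_succ, Fin.val_zero, Fin.val_succ]
  rw [if_pos (Nat.succ_pos j)]
  congr 1
  apply Finset.sum_congr rfl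
  intro i _
  simp [Nat.succ_lt_succ_iff]

lemma psum_snoc {m : ℕ} (δ : Fin m → Bool) (b : Bool) {j : ℕ} (h : j ≤ m) :
    psum (Fin.snoc δ b) j = psum δ j := by
  rw [psum_eq_sum_ite, psum_eq_sum_ite, Fin.sum_univ_castSucc]
  simp only [Fin.snoc_castSucc, Fin.coe_castSucc, Fin.val_last]
  rw [if_neg (by omega), add_zero]

lemma psum_init {m : ℕ} (ε : Fin (m+1) → Bool) {j : ℕ} (h : j ≤ m) :
    psum (Fin.init ε) j = psum ε j := by
  conv_rhs => rw [← Fin.snoc_init_self ε]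
  rw [psum_snoc _ _ h]

lemma psum_tail {m : ℕ} (ε : Fin (m+1) → Bool) (j : ℕ) :
    psum ε (j + 1) = (if ε 0 then (1:ℤ) else -1) + psum (Fin.tail ε) j := by
  conv_lhs => rw [← Fin.cons_self_tail ε]
  rw [psum_cons]

noncomputable def Bc (n : ℤ) (m : ℕ) : ℕ :=
  Nat.card {ε : Fin m → Bool // ∀ j ≤ m, psum ε j < n}

lemma card_split {α : Type*} [Finite α] (p q : α → Prop) :
    Nat.card {x // p x ∧ q x} + Nat.card {x // p x ∧ ¬ q x} = Nat.card {x // p x} := by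
  classical
  have := Fintype.ofFinite α
  simp only [Nat.card_eq_fintype_card, Fintype.card_subtype]
  rw [← Finset.card_filter_add_card_filter_not
    (s := Finset.univ.filter p) (p := q)]
  congr 1 <;> · rw [Finset.filter_filter]

lemma Bc_nonpos {n : ℤ} (hn : n ≤ 0) (m : ℕ) : Bc n m = 0 := by
  rw [Bc, Nat.card_eq_zero]
  left
  refine ⟨fun x => ?_⟩
  have := x.2 0 (Nat.zero_le m)
  rw [psum_zero] at this
  omega

lemma Bc_zero {n : ℤ} (hn : 1 ≤ n) : Bc n 0 = 1 := by
  rw [Bc, Nat.card_eq_one_iff_unique]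
  constructor
  · constructor
    intro a b
    apply Subtype.ext
    funext i
    exact absurd i.2 (Nat.not_lt_zero _)
  · exact ⟨⟨(fun i => true), fun j hj => by
      interval_cases j
      rw [psum_zero]; omega⟩⟩

lemma Bc_le_pow (n : ℤ) (m : ℕ) : Bc n m ≤ 2 ^ m := by
  have : Bc n m ≤ Nat.card (Fin m → Bool) :=
    Nat.card_le_card_of_injective (fun ε => ε.1) (fun a b h => Subtype.ext h)
  simpa using this

lemma Bc_cons {n : ℤ} (hn : 1 ≤ n) (m : ℕ) :
    Bc n (m + 1) = Bc (n - 1) m + Bc (n + 1) m := by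
  rw [Bc, ← card_split (fun ε : Fin (m+1) → Bool => ∀ j ≤ m + 1, psum ε j < n)
    (fun ε => ε 0 = true)]
  congr 1
  · exact Nat.card_congr
      { toFun := fun ε => ⟨Fin.tail ε.1, by
          intro j hj
          have h2 := ε.2.1 (j+1) (by omega)
          rw [psum_tail, ε.2.2, if_pos rfl] at h2
          omega⟩
        invFun := fun δ => ⟨Fin.cons true δ.1, ⟨by
          intro j hj
          cases j with
          | zero => rw [psum_zero]; omega
          | succ j =>
            rw [psum_cons, if_pos rfl]
            have := δ.2 j (by omega)
            omega, Fin.cons_zero _ _⟩⟩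
        left_inv := fun ε => Subtype.ext (by
          show Fin.cons true (Fin.tail ε.1) = ε.1
          conv_rhs => rw [← Fin.cons_self_tail ε.1]
          rw [ε.2.2])
        right_inv := fun δ => Subtype.ext (by simp) }
  · exact Nat.card_congr
      { toFun := fun ε => ⟨Fin.tail ε.1, by
          intro j hj
          have h2 := ε.2.1 (j+1) (by omega)
          have h0 : ε.1 0 = false := by
            cases h : ε.1 0
            · rfl
            · exact absurd h ε.2.2
          rw [psum_tail, h0] at h2
          simp only [Bool.false_eq_true, if_false] at h2
          omega⟩
        invFun := fun δ => ⟨Fin.cons false δ.1, ⟨by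
          intro j hj
          cases j with
          | zero => rw [psum_zero]; omega
          | succ j =>
            rw [psum_cons]
            simp only [Bool.false_eq_true, if_false]
            have := δ.2 j (by omega)
            omega, by simp⟩⟩
        left_inv := fun ε => Subtype.ext (by
          have h0 : ε.1 0 = false := by
            cases h : ε.1 0
            · rfl
            · exact absurd h ε.2.2
          show Fin.cons false (Fin.tail ε.1) = ε.1
          conv_rhs => rw [← Fin.cons_self_tail ε.1]
          rw [h0])
        right_inv := fun δ => Subtype.ext (by simp) }

lemma walkCount_eq (n : ℤ) (m : ℕ) : walkCount n m =
    Nat.card {δ : Fin m → Bool //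
      (∑ i, (if δ i then (1:ℤ) else -1)) = n - 1 ∧ ∀ j ≤ m, psum δ j < n} := rfl

lemma last_step {n : ℤ} {m : ℕ} (ε : Fin (m+1) → Bool)
    (hA : ∀ j ≤ m, psum ε j < n) (hge : ¬ psum ε (m+1) < n) :
    ε (Fin.last m) = true ∧ psum ε m = n - 1 := by
  push_neg at hge
  have hs := psum_succ ε (Nat.lt_succ_self m)
  have hm := hA m le_rfl
  rw [show (⟨m, Nat.lt_succ_self m⟩ : Fin (m+1)) = Fin.last m from rfl] at hs
  cases h : ε (Fin.last m)
  · rw [h] at hs; simp only [Bool.false_eq_true, if_false] at hs; omega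
  · rw [h] at hs; simp only [if_true] at hs; exact ⟨rfl, by omega⟩

lemma Bc_snoc {n : ℤ} (hn : 1 ≤ n) (m : ℕ) :
    walkCount n m + Bc n (m + 1) = 2 * Bc n m := by
  have h1 : Nat.card {ε : Fin (m+1) → Bool // ∀ j ≤ m, psum ε j < n} = 2 * Bc n m := by
    rw [Bc, Nat.card_congr
      ({ toFun := fun ε => (⟨Fin.init ε.1, fun j hj => by
            rw [psum_init _ hj]; exact ε.2 j hj⟩, ε.1 (Fin.last m))
         invFun := fun p => ⟨Fin.snoc p.1.1 p.2, fun j hj => by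
            rw [psum_snoc _ _ hj]; exact p.1.2 j hj⟩
         left_inv := fun ε => Subtype.ext (by
            show Fin.snoc (Fin.init ε.1) (ε.1 (Fin.last m)) = ε.1
            exact Fin.snoc_init_self ε.1)
         right_inv := fun p => by
            apply Prod.ext
            · apply Subtype.ext; simp
            · simp } :
        {ε : Fin (m+1) → Bool // ∀ j ≤ m, psum ε j < n} ≃
          {δ : Fin m → Bool // ∀ j ≤ m, psum δ j < n} × Bool),
      Nat.card_prod]
    simp [Bc, mul_comm]
  have h2 := card_split (fun ε : Fin (m+1) → Bool => ∀ j ≤ m, psum ε j < n)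
    (fun ε => psum ε (m+1) < n)
  have h3 : Nat.card {ε : Fin (m+1) → Bool //
      (∀ j ≤ m, psum ε j < n) ∧ psum ε (m+1) < n} = Bc n (m+1) := by
    rw [Bc]
    apply Nat.card_congr (Equiv.subtypeEquivRight _)
    intro ε
    constructor
    · rintro ⟨hA, h⟩ j hj
      rcases Nat.eq_or_lt_of_le hj with h' | h'
      · rw [h']; exact h
      · exact hA j (by omega)
    · intro h
      exact ⟨fun j hj => h j (by omega), h (m+1) le_rfl⟩
  have h4 : Nat.card {ε : Fin (m+1) → Bool //
      (∀ j ≤ m, psum ε j < n) ∧ ¬ psum ε (m+1) < n} = walkCount n m := by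
    rw [walkCount_eq]
    apply Nat.card_congr
    exact
      { toFun := fun ε => ⟨Fin.init ε.1, ⟨by
          have hlast := last_step ε.1 ε.2.1 ε.2.2
          have h5 : (∑ i, if Fin.init ε.1 i then (1:ℤ) else -1)
              = psum (Fin.init ε.1) m := (psum_top _ le_rfl).symm
          rw [h5, psum_init _ le_rfl]
          exact hlast.2,
          fun j hj => by rw [psum_init _ hj]; exact ε.2.1 j hj⟩⟩
        invFun := fun δ => ⟨Fin.snoc δ.1 true, ⟨fun j hj => by
            rw [psum_snoc _ _ hj]; exact δ.2.2 j hj, by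
          have hs := psum_succ (Fin.snoc δ.1 true) (Nat.lt_succ_self m)
          rw [show (⟨m, Nat.lt_succ_self m⟩ : Fin (m+1)) = Fin.last m from rfl,
            Fin.snoc_last, psum_snoc _ _ le_rfl, psum_top (δ.1 : Fin m → Bool) le_rfl] at hs
          rw [hs, δ.2.1]
          simp⟩⟩
        left_inv := fun ε => Subtype.ext (by
          have hb := (last_step ε.1 ε.2.1 ε.2.2).1
          show Fin.snoc (Fin.init ε.1) true = ε.1
          conv_rhs => rw [← Fin.snoc_init_self ε.1]
          rw [hb])
        right_inv := fun δ => Subtype.ext (by simp) }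
  rw [h3, h4] at h2
  omega

open Filter Topology

noncomputable def qq (n : ℤ) (m : ℕ) : ℝ := (Bc n m : ℝ) / 2 ^ m

noncomputable def LL (n : ℤ) : ℝ := ⨅ m : ℕ, qq n m

lemma qq_nonneg (n : ℤ) (m : ℕ) : 0 ≤ qq n m := by rw [qq]; positivity

lemma qq_le_one (n : ℤ) (m : ℕ) : qq n m ≤ 1 := by
  rw [qq, div_le_one (by positivity)]
  exact_mod_cast Bc_le_pow n m

lemma qq_anti (n : ℤ) : Antitone (qq n) := by
  apply antitone_nat_of_succ_le
  intro m
  have h : (Bc n (m+1) : ℝ) ≤ 2 * Bc n m := by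
    rcases le_or_gt n 0 with hn | hn
    · rw [Bc_nonpos hn, Bc_nonpos hn]; norm_num
    · have := Bc_snoc hn m
      have : Bc n (m+1) ≤ 2 * Bc n m := by omega
      exact_mod_cast this
  calc qq n (m+1) = (Bc n (m+1) : ℝ) / 2 ^ (m+1) := rfl
    _ ≤ (2 * Bc n m) / 2 ^ (m+1) := by gcongr
    _ = (Bc n m : ℝ) / 2 ^ m := by rw [pow_succ]; ring
    _ = qq n m := rfl

lemma qq_tendsto (n : ℤ) : Tendsto (qq n) atTop (𝓝 (LL n)) := by
  apply tendsto_atTop_ciInf (qq_anti n)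
  exact ⟨0, by rintro x ⟨m, rfl⟩; exact qq_nonneg n m⟩

lemma LL_nonneg (n : ℤ) : 0 ≤ LL n := le_ciInf fun m => qq_nonneg n m

lemma LL_le_one (n : ℤ) : LL n ≤ 1 :=
  le_trans (ciInf_le ⟨0, by rintro x ⟨m, rfl⟩; exact qq_nonneg n m⟩ 0) (qq_le_one n 0)

lemma LL_zero : LL 0 = 0 := by
  have : ∀ m, qq 0 m = 0 := fun m => by simp [qq, Bc_nonpos le_rfl]
  simp [LL, this]

lemma LL_rec {n : ℤ} (hn : 1 ≤ n) : 2 * LL n = LL (n - 1) + LL (n + 1) := by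
  have h1 : Tendsto (fun m => qq n (m + 1)) atTop (𝓝 (LL n)) :=
    (qq_tendsto n).comp (tendsto_add_atTop_nat 1)
  have h2 : ∀ m, qq n (m + 1) = (qq (n-1) m + qq (n+1) m) / 2 := by
    intro m
    rw [qq, qq, qq, Bc_cons hn m]
    push_cast
    rw [pow_succ]
    ring
  simp only [h2] at h1
  have h3 : Tendsto (fun m => (qq (n-1) m + qq (n+1) m) / 2) atTop
      (𝓝 ((LL (n-1) + LL (n+1)) / 2)) :=
    ((qq_tendsto (n-1)).add (qq_tendsto (n+1))).div_const 2
  have := tendsto_nhds_unique h1 h3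
  linarith

lemma LL_nat : ∀ k : ℕ, LL k = k * LL 1 := by
  have key : ∀ k : ℕ, LL (k : ℤ) = (k : ℝ) * LL 1 ∧ LL ((k : ℤ) + 1) = ((k : ℝ) + 1) * LL 1 := by
    intro k
    induction k with
    | zero => simp [LL_zero]
    | succ k ih =>
      constructor
      · push_cast
        exact ih.2
      · have hrec := LL_rec (n := (k : ℤ) + 1) (by omega)
        have e1 : ((k : ℤ) + 1) - 1 = (k : ℤ) := by ring
        rw [e1] at hrec
        push_cast
        rw [show ((k : ℤ) + 1 + 1) = (k : ℤ) + 2 from by ring]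
        rw [show ((k : ℤ) + 1) + 1 = (k : ℤ) + 2 from by ring] at hrec
        have h1 := ih.1
        have h2 := ih.2
        linarith
  exact fun k => (key k).1

lemma LL_one : LL 1 = 0 := by
  by_contra h
  have hpos : 0 < LL 1 := lt_of_le_of_ne (LL_nonneg 1) (Ne.symm h)
  obtain ⟨k, hk⟩ := exists_nat_gt (1 / LL 1)
  have h1 : (k : ℝ) * LL 1 ≤ 1 := by
    have := LL_le_one (k : ℤ)
    rw [LL_nat k] at this
    exact this
  rw [div_lt_iff₀ hpos] at hk
  linarith

lemma LL_eq_zero {n : ℤ} (hn : 0 ≤ n) : LL n = 0 := by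
  lift n to ℕ using hn
  rw [LL_nat n, LL_one, mul_zero]

lemma sum_eq {n : ℤ} (hn : 1 ≤ n) (m : ℕ) :
    ∑ k ∈ Finset.range m, (walkCount n k : ℝ) / 2 ^ (k + 1) = 1 - qq n m := by
  induction m with
  | zero => simp [qq, Bc_zero hn]
  | succ m ih =>
    rw [Finset.sum_range_succ, ih]
    have hb : (walkCount n m : ℝ) + Bc n (m + 1) = 2 * Bc n m := by
      exact_mod_cast Bc_snoc hn m
    rw [qq, qq]
    have e : (walkCount n m : ℝ) = 2 * Bc n m - Bc n (m + 1) := by linarith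
    rw [e, pow_succ]
    have h2 : (2:ℝ) ^ m ≠ 0 := by positivity
    field_simp
    ring


/-- With `r n k = C(n, k-1)/2^k` the first-passage probabilities of a fair `±1` walk to
level `n`, one has `∑_{k=1}^∞ r n k = 1` for every `n ≥ 1`. -/
theorem stmt_8 (r : ℤ → ℕ → ℝ)
    (hr : ∀ (n : ℤ) (k : ℕ), 1 ≤ k → r n k = (walkCount n (k - 1) : ℝ) / 2 ^ k) :
    ∀ n : ℤ, 1 ≤ n → HasSum (fun k : ℕ => r n (k + 1)) 1 := by
  intro n hn
  have key : (fun k : ℕ => r n (k + 1)) = fun k => (walkCount n k : ℝ) / 2 ^ (k + 1) := by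
    funext k
    rw [hr n (k + 1) (by omega)]
    norm_num
  rw [key]
  rw [hasSum_iff_tendsto_nat_of_nonneg (fun k => by positivity)]
  have h1 : ∀ m, ∑ k ∈ Finset.range m, (walkCount n k : ℝ) / 2 ^ (k + 1) = 1 - qq n m :=
    sum_eq hn
  simp only [h1]
  have h2 : Tendsto (fun m => 1 - qq n m) atTop (𝓝 (1 - LL n)) :=
    (qq_tendsto n).const_sub 1
  rw [LL_eq_zero (by omega), sub_zero] at h2
  exact h2
end

section
/- For every positive integer L, ∑_{j=1}^L binomial(2j, j)² / (16^j · (2j-1)) = 1 - (2L+1)/16^L · binomial(2L, L)². -/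
/-- For every positive integer `L`,
`∑_{j=1}^L binom(2j,j)²/(16^j (2j-1)) = 1 - (2L+1)/16^L · binom(2L,L)²`. -/
theorem stmt_9 (L : ℕ) (hL : 1 ≤ L) :
    ∑ j ∈ Finset.Icc 1 L, ((2 * j).choose j : ℝ) ^ 2 / (16 ^ j * (2 * j - 1))
      = 1 - (2 * L + 1) / 16 ^ L * ((2 * L).choose L : ℝ) ^ 2 := by
  induction L, hL using Nat.le_induction with
  | base => norm_num
  | succ n hn ih =>
    rw [Finset.sum_Icc_succ_top (by omega), ih]
    have key : ((n : ℝ) + 1) * ((2 * (n + 1)).choose (n + 1) : ℝ)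
        = 2 * (2 * n + 1) * ((2 * n).choose n : ℝ) := by
      have := Nat.succ_mul_centralBinom_succ n
      simp only [Nat.centralBinom] at this
      exact_mod_cast congrArg (Nat.cast : ℕ → ℝ) this
    have hn1 : ((n : ℝ) + 1) ≠ 0 := by positivity
    have hb : ((2 * (n + 1)).choose (n + 1) : ℝ)
        = 2 * (2 * n + 1) * ((2 * n).choose n : ℝ) / ((n : ℝ) + 1) := by
      field_simp
      linarith [key]
    rw [hb]
    have h16 : (16 : ℝ) ^ n ≠ 0 := by positivity
    have h2n1 : (2 * (n : ℝ) + 1) ≠ 0 := by positivity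
    have h3 : 2 * ((n : ℝ) + 1) - 1 ≠ 0 := by
      have : (0:ℝ) ≤ (n : ℝ) := Nat.cast_nonneg n
      intro h; linarith
    push_cast
    field_simp
    ring
end

section
/- ∑_{m=1}^∞ (binomial(2m,m)/4^m) · ((2m-2)!·2/(m!·(m-1)!·4^m)) = 1 - 2/π. -/
open Real

open Filter Finset Topology Real.Wallis in
private lemma wallis_inv_tendsto :
    Tendsto (fun n : ℕ => (W n)⁻¹) atTop (𝓝 (2 / π)) := by
  have := tendsto_W_nhds_pi_div_two.inv₀ (by positivity)
  simpa [one_div, inv_div] using this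

open Finset Real.Wallis in
private lemma term_eq (m : ℕ) :
    (((2 * (m + 1)).choose (m + 1) : ℝ) / 4 ^ (m + 1)) *
        (((2 * m).factorial : ℝ) * 2 / ((m + 1).factorial * m.factorial * 4 ^ (m + 1)))
      = (W m)⁻¹ - (W (m + 1))⁻¹ := by
  have h1 : ((2 * (m + 1)).choose (m + 1) : ℝ) =
      ((2 * (m + 1)).factorial : ℝ) / ((m + 1).factorial * (m + 1).factorial) := by
    rw [eq_div_iff (by positivity)]
    have := Nat.choose_mul_factorial_mul_factorial (Nat.le_of_lt_succ
      (by omega : m + 1 < 2 * (m + 1) + 1))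
    have h2 : 2 * (m + 1) - (m + 1) = m + 1 := by omega
    rw [h2] at this
    push_cast [← this]; ring
  rw [W_eq_factorial_ratio, W_eq_factorial_ratio, h1]
  have e1 : (2 * (m + 1)).factorial = (2 * m + 2) * ((2 * m + 1) * (2 * m).factorial) := by
    have : 2 * (m + 1) = (2 * m + 1) + 1 := by ring
    rw [this, Nat.factorial_succ, Nat.factorial_succ]
  have e2 : (m + 1).factorial = (m + 1) * m.factorial := Nat.factorial_succ m
  have hfm : (0 : ℝ) < m.factorial := by positivity
  have hf2m : (0 : ℝ) < (2 * m).factorial := by positivity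
  rw [inv_div, inv_div, e1, e2]
  push_cast
  field_simp
  have h4 : (4 : ℝ) ^ (m * 2) = 2 ^ (m * 4) := by
    rw [show (4 : ℝ) = 2 ^ 2 by norm_num, ← pow_mul]
    congr 1; ring
  ring_nf
  rw [h4]
  ring

open Filter Topology Real.Wallis in
/-- `∑_{m=1}^∞ (binom(2m,m)/4^m) · ((2m-2)!·2/(m!·(m-1)!·4^m)) = 1 - 2/π`. -/
theorem stmt_13 :
    HasSum (fun m : ℕ =>
      (((2 * (m + 1)).choose (m + 1) : ℝ) / 4 ^ (m + 1)) *
        (((2 * m).factorial : ℝ) * 2 / ((m + 1).factorial * m.factorial * 4 ^ (m + 1))))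
      (1 - 2 / π) := by
  have hnn : ∀ m : ℕ,
      0 ≤ (((2 * (m + 1)).choose (m + 1) : ℝ) / 4 ^ (m + 1)) *
        (((2 * m).factorial : ℝ) * 2 / ((m + 1).factorial * m.factorial * 4 ^ (m + 1))) := by
    intro m; positivity
  rw [hasSum_iff_tendsto_nat_of_nonneg hnn]
  have hsum : ∀ n : ℕ,
      ∑ i ∈ Finset.range n,
        (((2 * (i + 1)).choose (i + 1) : ℝ) / 4 ^ (i + 1)) *
          (((2 * i).factorial : ℝ) * 2 / ((i + 1).factorial * i.factorial * 4 ^ (i + 1)))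
        = (W 0)⁻¹ - (W n)⁻¹ := by
    intro n
    simp_rw [term_eq]
    exact Finset.sum_range_sub' (fun i => (W i)⁻¹) n
  simp_rw [hsum]
  have hW0 : (W 0)⁻¹ = 1 := by simp [W]
  rw [hW0]
  exact (wallis_inv_tendsto).const_sub 1
end

section
/- The series ∑_{m=1}^∞ ((2s+1)/((m+s+1)·2·4^m) · binomial(2m, m-s))² converges for every integer s ≥ 0, and for s = 1 (i.e., n = 3) its value together with the m = 0 term equals 236/(3π) - 25; that is, ∑_{m=0}^∞ (r(3, 2m+1))² = 236/(3π) - 25 where r(3,2m+1) = 3/((m+2)·2·4^m)·binomial(2m, m-1). -/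
open Real

/-!
Write `c m = C(2m, m) / 4^m`, so that `c (m+1) = (2m+1)/(2m+2) · c m`. Since
`C(2m, m-1) = m/(m+1) · C(2m, m)`, the squared level-3 probabilities are rational multiples of
`c m ^ 2`, and there is a rational function `R` with `r(3, 2m+1)² = R m · c m² - R (m+1) · c (m+1)²`.
The series therefore telescopes to `R 0 - lim R m · c m²`. Wallis' product gives
`(2m+1) · c m² → 2/π` and `R m ~ -(118/3)(2m+1)`, so the limit is `-236/(3π)`, while `R 0 = -25`.
Summability at a general level `2s+1` only needs `C(2m, k) ≤ 4^m`.
-/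

open Filter Finset Topology

noncomputable def normCentralBinom (m : ℕ) : ℝ := (m.centralBinom : ℝ) / 4 ^ m

lemma normCentralBinom_zero : normCentralBinom 0 = 1 := by simp [normCentralBinom]

lemma normCentralBinom_succ (m : ℕ) :
    normCentralBinom (m + 1) = (2 * m + 1) / (2 * m + 2) * normCentralBinom m := by
  have h : ((m : ℝ) + 1) * (m + 1).centralBinom = 2 * (2 * m + 1) * m.centralBinom := by
    exact_mod_cast Nat.succ_mul_centralBinom_succ m
  rw [normCentralBinom, normCentralBinom, pow_succ]
  field_simp
  linear_combination 2 * h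

lemma mul_normCentralBinom_sq_mul_W (m : ℕ) :
    (2 * m + 1) * normCentralBinom m ^ 2 * Wallis.W m = 1 := by
  have h : (m.centralBinom : ℝ) * m.factorial * m.factorial = (2 * m).factorial := by
    have := Nat.choose_mul_factorial_mul_factorial (n := 2 * m) (k := m) (by omega)
    rw [show 2 * m - m = m by omega] at this
    exact_mod_cast this
  rw [Wallis.W_eq_factorial_ratio, normCentralBinom, ← h]
  have : (2 : ℝ) ^ (4 * m) = (4 ^ m) ^ 2 := by
    rw [show (4 : ℝ) = 2 ^ 2 by norm_num, ← pow_mul, ← pow_mul]; ring_nf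
  rw [this]
  have := Nat.centralBinom_ne_zero m
  field_simp

lemma tendsto_mul_normCentralBinom_sq :
    Tendsto (fun m : ℕ => (2 * m + 1) * normCentralBinom m ^ 2) atTop (𝓝 (2 / π)) := by
  have := Wallis.tendsto_W_nhds_pi_div_two.inv₀ (by positivity)
  rw [inv_div] at this
  refine this.congr fun m => ?_
  exact (eq_inv_of_mul_eq_one_left (mul_normCentralBinom_sq_mul_W m)).symm

namespace FirstPassage

/-- `prob s m` is `r(2s+1, 2m+1)`, the probability that the simple random walk first reaches
level `2s+1` at step `2m+1`; the `if` encodes that `C(2m, m-s)` vanishes for `m < s`. -/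
noncomputable def prob (s m : ℕ) : ℝ :=
  (2 * s + 1) / ((m + s + 1) * 2 * 4 ^ m) *
    (if s ≤ m then ((2 * m).choose (m - s) : ℝ) else 0)

lemma prob_nonneg (s m : ℕ) : 0 ≤ prob s m := by
  unfold prob
  split_ifs <;> positivity

lemma prob_le (s m : ℕ) : prob s m ≤ (2 * s + 1) / (m + 1) := by
  have hchoose : (if s ≤ m then ((2 * m).choose (m - s) : ℝ) else 0) ≤ 4 ^ m := by
    split_ifs
    · exact_mod_cast (Nat.choose_le_centralBinom _ m).trans (Nat.centralBinom_le_four_pow m)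
    · positivity
  calc prob s m ≤ (2 * s + 1) / ((m + s + 1) * 2 * 4 ^ m) * 4 ^ m := by
        unfold prob; gcongr
    _ = (2 * s + 1) / ((m + s + 1) * 2) := by field_simp
    _ ≤ (2 * s + 1) / (m + 1) := by gcongr; linarith [(s.cast_nonneg : (0 : ℝ) ≤ s)]

lemma summable_prob_sq (s : ℕ) : Summable fun m => prob s m ^ 2 := by
  have hp : Summable fun m : ℕ => ‖((2 * s + 1 : ℝ) ^ 2) / ((m : ℝ) + (1 : ℕ)) ^ 2‖ :=
    summable_pow_div_add _ 2 1 one_lt_two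
  refine .of_nonneg_of_le (fun m => sq_nonneg _) (fun m => ?_) hp
  rw [Nat.cast_one, Real.norm_of_nonneg (by positivity), ← div_pow]
  exact pow_le_pow_left₀ (prob_nonneg s m) (prob_le s m) 2

lemma prob_one_eq (m : ℕ) : prob 1 m = 3 * m / (2 * (m + 1) * (m + 2)) * normCentralBinom m := by
  rcases m with _ | m
  · simp [prob]
  · have h := Nat.choose_succ_right_eq (2 * (m + 1)) m
    rw [show 2 * (m + 1) - m = m + 2 by omega, ← Nat.centralBinom_eq_two_mul_choose] at h
    have h' : ((2 * (m + 1)).choose m : ℝ) * (m + 2) = (m + 1).centralBinom * (m + 1) := by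
      exact_mod_cast h.symm
    simp only [prob, normCentralBinom, le_add_iff_nonneg_left, zero_le, if_true,
      Nat.add_sub_cancel]
    push_cast
    field_simp
    linear_combination (3 * (m : ℝ) + 9) * h'

noncomputable def antidiffCoeff (m : ℕ) : ℝ :=
  -(236 * m ^ 5 + 1475 * m ^ 4 + 3426 * m ^ 3 + 3631 * m ^ 2 + 1732 * m + 300) /
    (3 * (m + 1) ^ 2 * (m + 2) ^ 2)

noncomputable def antidiff (m : ℕ) : ℝ := antidiffCoeff m * normCentralBinom m ^ 2

lemma prob_one_sq_eq_antidiff_sub (m : ℕ) : prob 1 m ^ 2 = antidiff m - antidiff (m + 1) := by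
  rw [prob_one_eq, antidiff, antidiff, normCentralBinom_succ, antidiffCoeff, antidiffCoeff]
  push_cast
  field_simp
  ring

lemma tendsto_antidiffCoeff_div :
    Tendsto (fun m : ℕ => antidiffCoeff m / (2 * m + 1)) atTop (𝓝 (-118 / 3)) := by
  let F : ℝ → ℝ := fun t => -(236 + 1475 * t + 3426 * t ^ 2 + 3631 * t ^ 3 + 1732 * t ^ 4
    + 300 * t ^ 5) / (3 * (1 + t) ^ 2 * (1 + 2 * t) ^ 2 * (2 + t))
  have hF : ContinuousAt F 0 := by
    apply ContinuousAt.div (by fun_prop) (by fun_prop); norm_num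
  have hlim := hF.tendsto.comp (tendsto_inv_atTop_nhds_zero_nat (𝕜 := ℝ))
  rw [show F 0 = -118 / 3 by norm_num [F]] at hlim
  refine hlim.congr' ?_
  filter_upwards [eventually_ne_atTop 0] with m hm
  have : (m : ℝ) ≠ 0 := by exact_mod_cast hm
  simp only [Function.comp, F, antidiffCoeff]
  field_simp

lemma tendsto_antidiff : Tendsto antidiff atTop (𝓝 (-236 / (3 * π))) := by
  have := tendsto_antidiffCoeff_div.mul tendsto_mul_normCentralBinom_sq
  rw [show (-118 / 3 : ℝ) * (2 / π) = -236 / (3 * π) by ring] at this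
  refine this.congr fun m => ?_
  rw [antidiff]
  field_simp

lemma antidiff_zero : antidiff 0 = -25 := by
  norm_num [antidiff, antidiffCoeff, normCentralBinom_zero]

lemma hasSum_prob_one_sq : HasSum (fun m => prob 1 m ^ 2) (236 / (3 * π) - 25) := by
  rw [hasSum_iff_tendsto_nat_of_nonneg (fun m => sq_nonneg _)]
  have := tendsto_const_nhds (x := antidiff 0).sub tendsto_antidiff
  rw [antidiff_zero, show (-25 : ℝ) - -236 / (3 * π) = 236 / (3 * π) - 25 by ring] at this
  refine this.congr fun n => ?_
  simp only [prob_one_sq_eq_antidiff_sub, sum_range_sub', antidiff_zero]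

end FirstPassage

/-- The series `∑_m (r(2s+1, 2m+1))²` converges for every `s ≥ 0`, where
`r(2s+1,2m+1) = (2s+1)/((m+s+1)·2·4^m)·binom(2m, m-s)` (binomials with negative lower
index vanish); and for `s = 1`, i.e. level `n = 3`,
`∑_{m=0}^∞ (r(3,2m+1))² = 236/(3π) - 25`. -/
theorem stmt_16 :
    (∀ s : ℕ, Summable (fun m : ℕ =>
      ((2 * s + 1) / ((m + s + 1) * 2 * 4 ^ m) *
        (if s ≤ m then ((2 * m).choose (m - s) : ℝ) else 0)) ^ 2)) ∧
    HasSum (fun m : ℕ =>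
      ((3 : ℝ) / ((m + 2) * 2 * 4 ^ m) *
        (if 1 ≤ m then ((2 * m).choose (m - 1) : ℝ) else 0)) ^ 2)
      (236 / (3 * π) - 25) := by
  refine ⟨FirstPassage.summable_prob_sq, ?_⟩
  convert FirstPassage.hasSum_prob_one_sq using 4 with m
  simp only [FirstPassage.prob]
  norm_num [add_assoc, one_add_one_eq_two]
end
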